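/- arXiv:1308.6477 — 6 statements merged into one kernel-verified Lean document; each statement's English description precedes it below -/
import Mathlib

section
/- Let a be a real number that is not zero or a negative integer. Then the function z ↦ φ(a, z) = Σ_{n≥0} (−1)^n z^{2n}/(a)_{2n} is entire (differentiable on all of ℂ), and it has exponential type exactly 1: for every ε > 0 there exists C > 0 such that |φ(a, z)| ≤ C·exp((1+ε)|z|) for all z ∈ ℂ, while for every ε ∈ (0,1) there is no constant C > 0 with |φ(a, z)| ≤ C·exp((1−ε)|z|) for all z ∈ ℂ. -/
/-!
Since `((a)_{m+1} / (m+1)!) / ((a)_m / m!) = (a + m) / (m + 1) → 1`, for every `ρ > 1` the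
quotients `(a)_m / m!` and `m! / (a)_m` are `O(ρ^m)`. Hence the series of `φ(a, z)` is dominated
termwise by `C cosh(ρ |z|)`, which gives both holomorphy and the upper bound.
For the lower bound, `φ(a, iy) = Σ y^{2n} / (a)_{2n}` is real, and `(a)_m` has eventually constant
sign `s` because `a + m > 0` for large `m`. Comparing coefficients, with the finitely many
exceptional ones absorbed into a multiple of `δ^m / m!`, gives
`s φ(a, iy) ≥ K cosh(βy) - M cosh(δy)` for any `β < 1` and `δ > 0`; with `1 - ε = δ < β` this
outgrows `C exp((1 - ε) y)`.
-/

open Real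

/-- Complex version of `phi`: `phiC a z = Σ_{n≥0} (−1)^n z^(2n)/(a)_{2n}`,
where `(a)_m` is the Pochhammer symbol of the real number `a`. -/
noncomputable def phiC (a : ℝ) (z : ℂ) : ℂ :=
  ∑' n : ℕ, (-1 : ℂ) ^ n * z ^ (2 * n) / (((ascPochhammer ℝ (2 * n)).eval a : ℝ) : ℂ)

open Filter Topology Nat

theorem exists_abs_le_mul_pow_of_tendsto_ratio {u : ℕ → ℝ} (hu : ∀ n, u n ≠ 0)
    (h : Tendsto (fun n => u (n + 1) / u n) atTop (𝓝 1)) {ρ : ℝ} (hρ : 1 < ρ) :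
    ∃ C, 0 < C ∧ ∀ n, |u n| ≤ C * ρ ^ n := by
  have hρ0 : 0 < ρ := one_pos.trans hρ
  set v : ℕ → ℝ := fun n => |u n| / ρ ^ n with hv_def
  have hv_pos (n : ℕ) : 0 < v n := div_pos (abs_pos.2 (hu n)) (pow_pos hρ0 n)
  have hv : Summable v := by
    refine summable_of_ratio_test_tendsto_lt_one (inv_lt_one_of_one_lt₀ hρ)
      (Eventually.of_forall fun n => (hv_pos n).ne') ?_
    have hratio : (fun n => ‖v (n + 1)‖ / ‖v n‖) = fun n => |u (n + 1) / u n| / ρ := by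
      funext n
      simp only [hv_def, Real.norm_eq_abs, abs_div, abs_abs, abs_pow, abs_of_pos hρ0]
      rw [pow_succ]
      field_simp [hu n]
    rw [hratio, ← one_div]
    simpa using h.abs.div_const ρ
  refine ⟨∑' n, v n, (hv_pos 0).trans_le (hv.le_tsum 0 fun i _ => (hv_pos i).le), fun n => ?_⟩
  rw [← div_le_iff₀ (pow_pos hρ0 n)]
  exact hv.le_tsum n fun i _ => (hv_pos i).le

theorem exists_le_add_mul_of_eventually_le {f g h : ℕ → ℝ} (hh : ∀ n, 0 < h n)
    (hfg : ∀ᶠ n in atTop, f n ≤ g n) : ∃ M, 0 ≤ M ∧ ∀ n, f n ≤ g n + M * h n := by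
  have hbdd : IsBoundedUnder (· ≤ ·) atTop fun n => (f n - g n) / h n :=
    isBoundedUnder_of_eventually_le (a := 0) <| hfg.mono fun n hn =>
      div_nonpos_of_nonpos_of_nonneg (sub_nonpos.2 hn) (hh n).le
  obtain ⟨M, hM⟩ := hbdd.bddAbove_range
  refine ⟨max M 0, le_max_right M 0, fun n => ?_⟩
  have := (div_le_iff₀ (hh n)).1 ((hM ⟨n, rfl⟩).trans (le_max_left M 0))
  linarith

theorem ascPochhammer_eval_ne_zero {a : ℝ} (ha : ∀ k : ℕ, a ≠ -(k : ℝ)) (n : ℕ) :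
    (ascPochhammer ℝ n).eval a ≠ 0 := by
  induction n with
  | zero => simp
  | succ n ih =>
    rw [ascPochhammer_succ_eval]
    exact mul_ne_zero ih fun h => ha n (by linarith)

theorem tendsto_ascPochhammer_div_factorial_ratio {a : ℝ} (ha : ∀ k : ℕ, a ≠ -(k : ℝ)) :
    Tendsto (fun n : ℕ => ((ascPochhammer ℝ (n + 1)).eval a / (n + 1)!) /
      ((ascPochhammer ℝ n).eval a / n !)) atTop (𝓝 1) := by
  have hratio (n : ℕ) : ((ascPochhammer ℝ (n + 1)).eval a / (n + 1)!) /
      ((ascPochhammer ℝ n).eval a / n !) = 1 + (a - 1) * (1 / ((n : ℝ) + 1)) := by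
    have := ascPochhammer_eval_ne_zero ha n
    rw [ascPochhammer_succ_eval, Nat.factorial_succ]
    push_cast
    field_simp
    ring
  simp_rw [hratio]
  simpa using (tendsto_one_div_add_atTop_nhds_zero_nat.const_mul (a - 1)).const_add 1

theorem exists_abs_ascPochhammer_le {a : ℝ} (ha : ∀ k : ℕ, a ≠ -(k : ℝ)) {ρ : ℝ} (hρ : 1 < ρ) :
    ∃ C, 0 < C ∧ ∀ n, |(ascPochhammer ℝ n).eval a| ≤ C * ρ ^ n * n ! := by
  obtain ⟨C, hC0, hC⟩ := exists_abs_le_mul_pow_of_tendsto_ratio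
    (fun n => div_ne_zero (ascPochhammer_eval_ne_zero ha n)
      (Nat.cast_ne_zero.2 n.factorial_ne_zero))
    (tendsto_ascPochhammer_div_factorial_ratio ha) hρ
  refine ⟨C, hC0, fun n => ?_⟩
  have := hC n
  rwa [abs_div, Nat.abs_cast, div_le_iff₀ (by positivity)] at this

theorem exists_factorial_le_abs_ascPochhammer {a : ℝ} (ha : ∀ k : ℕ, a ≠ -(k : ℝ)) {ρ : ℝ}
    (hρ : 1 < ρ) : ∃ C, 0 < C ∧ ∀ n, (n ! : ℝ) ≤ C * ρ ^ n * |(ascPochhammer ℝ n).eval a| := by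
  have hratio : Tendsto (fun n : ℕ => ((ascPochhammer ℝ (n + 1)).eval a / (n + 1)!)⁻¹ /
      ((ascPochhammer ℝ n).eval a / n !)⁻¹) atTop (𝓝 1) := by
    convert (tendsto_ascPochhammer_div_factorial_ratio ha).inv₀ one_ne_zero using 2 with n
    · rw [inv_div_inv, inv_div]
    · rw [inv_one]
  obtain ⟨C, hC0, hC⟩ := exists_abs_le_mul_pow_of_tendsto_ratio
    (fun n => inv_ne_zero (div_ne_zero (ascPochhammer_eval_ne_zero ha n)
      (Nat.cast_ne_zero.2 n.factorial_ne_zero))) hratio hρ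
  refine ⟨C, hC0, fun n => ?_⟩
  have := hC n
  rwa [inv_div, abs_div, Nat.abs_cast,
    div_le_iff₀ (abs_pos.2 (ascPochhammer_eval_ne_zero ha n))] at this

theorem exists_eventually_mul_ascPochhammer_eq_abs (a : ℝ) :
    ∃ s : ℝ, |s| = 1 ∧ ∀ᶠ n in atTop,
      s * (ascPochhammer ℝ n).eval a = |(ascPochhammer ℝ n).eval a| := by
  obtain ⟨N, hN⟩ := exists_nat_gt (-a)
  set p := (ascPochhammer ℝ N).eval a
  refine ⟨if 0 ≤ p then 1 else -1, by split_ifs <;> simp, eventually_atTop.2 ⟨N, fun n hn => ?_⟩⟩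
  obtain ⟨k, rfl⟩ := Nat.exists_eq_add_of_le hn
  have hsplit : (ascPochhammer ℝ (N + k)).eval a = p * (ascPochhammer ℝ k).eval (a + N) := by
    rw [← ascPochhammer_mul, Polynomial.eval_mul, Polynomial.eval_comp, Polynomial.eval_add,
      Polynomial.eval_X, Polynomial.eval_natCast]
  have hpos := ascPochhammer_pos k (a + N) (by linarith)
  rw [hsplit, abs_mul, abs_of_pos hpos]
  split_ifs with hp
  · rw [abs_of_nonneg hp, one_mul]
  · rw [abs_of_neg (not_le.1 hp)]
    ring

theorem exists_le_div_ascPochhammer {a : ℝ} (ha : ∀ k : ℕ, a ≠ -(k : ℝ)) {β δ : ℝ}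
    (hβ : 0 < β) (hβ1 : β < 1) (hδ : 0 < δ) :
    ∃ s K M : ℝ, |s| = 1 ∧ 0 < K ∧ 0 ≤ M ∧
      ∀ n, (K * β ^ n - M * δ ^ n) / n ! ≤ s / (ascPochhammer ℝ n).eval a := by
  obtain ⟨s, hs, hsP⟩ := exists_eventually_mul_ascPochhammer_eq_abs a
  obtain ⟨C, hC0, hC⟩ := exists_abs_ascPochhammer_le ha (one_lt_inv_iff₀.2 ⟨hβ, hβ1⟩)
  have hlower : ∀ᶠ n in atTop, C⁻¹ * β ^ n / n ! ≤ s / (ascPochhammer ℝ n).eval a := by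
    filter_upwards [hsP] with n hn
    have hP := ascPochhammer_eval_ne_zero ha n
    have hsdiv : s / (ascPochhammer ℝ n).eval a = 1 / |(ascPochhammer ℝ n).eval a| := by
      have hs2 : s * s = 1 := by rw [← abs_mul_abs_self, hs, one_mul]
      rw [← hn, div_eq_div_iff hP (mul_ne_zero (by rintro rfl; simp at hs) hP)]
      linear_combination (ascPochhammer ℝ n).eval a * hs2
    rw [hsdiv, div_le_div_iff₀ (by positivity) (abs_pos.2 hP)]
    calc C⁻¹ * β ^ n * |(ascPochhammer ℝ n).eval a| ≤ C⁻¹ * β ^ n * (C * β⁻¹ ^ n * n !) :=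
          mul_le_mul_of_nonneg_left (hC n) (by positivity)
      _ = 1 * n ! := by rw [inv_pow]; field_simp
  obtain ⟨M, hM0, hM⟩ := exists_le_add_mul_of_eventually_le (h := fun n => δ ^ n / n !)
    (fun n => by positivity) hlower
  refine ⟨s, C⁻¹, M, hs, inv_pos.2 hC0, hM0, fun n => ?_⟩
  have := hM n
  rw [sub_div]
  linarith [mul_div_assoc M (δ ^ n) (n ! : ℝ), mul_div_assoc C⁻¹ (β ^ n) (n ! : ℝ)]

noncomputable def phiCTerm (a : ℝ) (z : ℂ) (n : ℕ) : ℂ :=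
  (-1 : ℂ) ^ n * z ^ (2 * n) / (((ascPochhammer ℝ (2 * n)).eval a : ℝ) : ℂ)

theorem norm_phiCTerm_le {a C ρ r : ℝ}
    (hC : ∀ m, (m ! : ℝ) ≤ C * ρ ^ m * |(ascPochhammer ℝ m).eval a|) {z : ℂ} (hz : ‖z‖ ≤ r)
    (n : ℕ) : ‖phiCTerm a z n‖ ≤ C * ((ρ * r) ^ (2 * n) / (2 * n)!) := by
  have hP : 0 < |(ascPochhammer ℝ (2 * n)).eval a| := by
    refine abs_pos.2 fun h0 => ?_
    have := hC (2 * n)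
    rw [h0, abs_zero, mul_zero] at this
    exact (2 * n).factorial_pos.not_ge (by exact_mod_cast this)
  have hr : 0 ≤ r := (norm_nonneg z).trans hz
  rw [phiCTerm, norm_div, norm_mul, norm_pow, norm_pow, norm_neg, norm_one, one_pow, one_mul,
    Complex.norm_real, Real.norm_eq_abs, mul_div_assoc', div_le_div_iff₀ hP (by positivity)]
  calc ‖z‖ ^ (2 * n) * (2 * n)!
      ≤ r ^ (2 * n) * (C * ρ ^ (2 * n) * |(ascPochhammer ℝ (2 * n)).eval a|) := by
        gcongr
        exact hC _
    _ = C * (ρ * r) ^ (2 * n) * |(ascPochhammer ℝ (2 * n)).eval a| := by ring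

theorem norm_phiC_le {a C ρ : ℝ}
    (hC : ∀ m, (m ! : ℝ) ≤ C * ρ ^ m * |(ascPochhammer ℝ m).eval a|) (z : ℂ) :
    ‖phiC a z‖ ≤ C * Real.cosh (ρ * ‖z‖) :=
  tsum_of_norm_bounded ((Real.hasSum_cosh _).mul_left C) (norm_phiCTerm_le hC le_rfl)

theorem summable_phiCTerm {a C ρ : ℝ}
    (hC : ∀ m, (m ! : ℝ) ≤ C * ρ ^ m * |(ascPochhammer ℝ m).eval a|) (z : ℂ) :
    Summable (phiCTerm a z) :=
  .of_norm_bounded ((Real.hasSum_cosh _).summable.mul_left C) (norm_phiCTerm_le hC le_rfl)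

theorem differentiable_phiC {a C ρ : ℝ}
    (hC : ∀ m, (m ! : ℝ) ≤ C * ρ ^ m * |(ascPochhammer ℝ m).eval a|) :
    Differentiable ℂ (phiC a) := by
  intro z
  have hz : z ∈ Metric.ball (0 : ℂ) (‖z‖ + 1) := by simp
  have hdiff : DifferentiableOn ℂ (phiC a) (Metric.ball 0 (‖z‖ + 1)) :=
    Complex.differentiableOn_tsum_of_summable_norm
      ((Real.hasSum_cosh (ρ * (‖z‖ + 1))).summable.mul_left C)
      (fun n => (((differentiable_pow (2 * n)).const_mul _).div_const _).differentiableOn)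
      Metric.isOpen_ball fun n w hw => norm_phiCTerm_le hC (mem_ball_zero_iff.1 hw).le n
  exact hdiff.differentiableAt (Metric.isOpen_ball.mem_nhds hz)

theorem phiCTerm_ofReal_mul_I (a y : ℝ) (n : ℕ) :
    phiCTerm a (y * Complex.I) n =
      ((y ^ (2 * n) / (ascPochhammer ℝ (2 * n)).eval a : ℝ) : ℂ) := by
  rw [phiCTerm, mul_pow, pow_mul Complex.I, Complex.I_sq, ← mul_assoc, mul_comm _ ((y : ℂ) ^ _),
    mul_assoc, ← mul_pow, neg_one_mul, neg_neg, one_pow, mul_one]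
  push_cast
  rfl

theorem Real.cosh_le_exp_of_nonneg {x : ℝ} (hx : 0 ≤ x) : Real.cosh x ≤ Real.exp x := by
  rw [Real.cosh_eq]
  linarith [Real.exp_le_exp.2 (neg_le_self hx)]

theorem Real.exp_div_two_le_cosh (x : ℝ) : Real.exp x / 2 ≤ Real.cosh x := by
  rw [Real.cosh_eq]
  linarith [Real.exp_pos (-x)]

theorem exists_exp_sub_exp_le_norm_phiC_ofReal_mul_I {a : ℝ} (ha : ∀ k : ℕ, a ≠ -(k : ℝ))
    {β δ : ℝ} (hβ : 0 < β) (hβ1 : β < 1) (hδ : 0 < δ) :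
    ∃ K M : ℝ, 0 < K ∧ ∀ y : ℝ, 0 ≤ y →
      K * Real.exp (β * y) - M * Real.exp (δ * y) ≤ ‖phiC a (y * Complex.I)‖ := by
  obtain ⟨s, K, M, hs, hK, hM, hcoeff⟩ := exists_le_div_ascPochhammer ha hβ hβ1 hδ
  obtain ⟨C, -, hC⟩ := exists_factorial_le_abs_ascPochhammer ha one_lt_two
  refine ⟨K / 2, M, half_pos hK, fun y hy => ?_⟩
  set F : ℕ → ℝ := fun n => y ^ (2 * n) / (ascPochhammer ℝ (2 * n)).eval a
  have hF : Summable F := Complex.summable_ofReal.1 <|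
    (summable_phiCTerm hC _).congr (phiCTerm_ofReal_mul_I a y)
  have hphi : ‖phiC a (y * Complex.I)‖ = |∑' n, F n| := by
    have : phiC a (y * Complex.I) = ((∑' n, F n : ℝ) : ℂ) := by
      rw [Complex.ofReal_tsum]
      exact tsum_congr (phiCTerm_ofReal_mul_I a y)
    rw [this, Complex.norm_real, Real.norm_eq_abs]
  have hterm (n : ℕ) : K * ((β * y) ^ (2 * n) / (2 * n)!) - M * ((δ * y) ^ (2 * n) / (2 * n)!) ≤
      s * F n := by
    have := mul_le_mul_of_nonneg_left (hcoeff (2 * n)) (pow_nonneg hy (2 * n))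
    calc _ = y ^ (2 * n) * ((K * β ^ (2 * n) - M * δ ^ (2 * n)) / (2 * n)!) := by ring
      _ ≤ y ^ (2 * n) * (s / (ascPochhammer ℝ (2 * n)).eval a) := this
      _ = s * F n := by simp only [F]; ring
  have hcosh : K * Real.cosh (β * y) - M * Real.cosh (δ * y) ≤ s * ∑' n, F n := by
    rw [← tsum_mul_left]
    exact hasSum_le hterm
      (((Real.hasSum_cosh _).mul_left K).sub ((Real.hasSum_cosh _).mul_left M))
      (hF.mul_left s).hasSum
  have hsF : s * ∑' n, F n ≤ ‖phiC a (y * Complex.I)‖ := by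
    rw [hphi, ← one_mul |_|, ← hs, ← abs_mul]
    exact le_abs_self _
  have hβy := exp_div_two_le_cosh (β * y)
  have hδy := cosh_le_exp_of_nonneg (mul_nonneg hδ.le hy)
  linarith [mul_le_mul_of_nonneg_left hβy hK.le, mul_le_mul_of_nonneg_left hδy hM]

theorem not_forall_mul_exp_le_mul_exp {β δ K L : ℝ} (hδβ : δ < β) (hK : 0 < K) :
    ¬ ∀ y : ℝ, 0 ≤ y → K * Real.exp (β * y) ≤ L * Real.exp (δ * y) := by
  intro h
  have hgrow : Tendsto (fun y => Real.exp ((β - δ) * y)) atTop atTop :=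
    Real.tendsto_exp_atTop.comp (tendsto_id.const_mul_atTop (sub_pos.2 hδβ))
  obtain ⟨y, hyL, hy⟩ := ((hgrow.eventually_gt_atTop (L / K)).and (eventually_ge_atTop 0)).exists
  have hsplit : Real.exp (β * y) = Real.exp ((β - δ) * y) * Real.exp (δ * y) := by
    rw [← Real.exp_add]; ring_nf
  have := h y hy
  rw [hsplit, ← mul_assoc] at this
  have := le_of_mul_le_mul_right this (Real.exp_pos _)
  rw [div_lt_iff₀' hK] at hyL
  linarith

theorem phiC_entire_exponential_type (a : ℝ) (ha : ∀ k : ℕ, a ≠ -(k : ℝ)) :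
    Differentiable ℂ (phiC a) ∧
    (∀ ε : ℝ, 0 < ε → ∃ C : ℝ, 0 < C ∧
      ∀ z : ℂ, ‖phiC a z‖ ≤ C * Real.exp ((1 + ε) * ‖z‖)) ∧
    (∀ ε : ℝ, 0 < ε → ε < 1 → ¬ ∃ C : ℝ, 0 < C ∧
      ∀ z : ℂ, ‖phiC a z‖ ≤ C * Real.exp ((1 - ε) * ‖z‖)) := by
  refine ⟨?_, fun ε hε => ?_, fun ε hε hε1 => ?_⟩
  · obtain ⟨C, -, hC⟩ := exists_factorial_le_abs_ascPochhammer ha one_lt_two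
    exact differentiable_phiC hC
  · obtain ⟨C, hC0, hC⟩ := exists_factorial_le_abs_ascPochhammer ha (lt_add_of_pos_right 1 hε)
    refine ⟨C, hC0, fun z => (norm_phiC_le hC z).trans ?_⟩
    gcongr
    exact cosh_le_exp_of_nonneg (by positivity)
  · rintro ⟨C, -, hC⟩
    obtain ⟨K, M, hK, hKM⟩ := exists_exp_sub_exp_le_norm_phiC_ofReal_mul_I ha
      (β := 1 - ε / 2) (δ := 1 - ε) (by linarith) (by linarith) (by linarith)
    refine not_forall_mul_exp_le_mul_exp (β := 1 - ε / 2) (δ := 1 - ε) (L := C + M)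
      (by linarith) hK fun y hy => ?_
    have hupper := hC (y * Complex.I)
    rw [norm_mul, Complex.norm_I, mul_one, Complex.norm_real, Real.norm_of_nonneg hy] at hupper
    linarith [hKM y hy]
end

section
/- Let a be a real number such that neither a nor a−1 is zero or a negative integer. Then for all real z, (a−1)·φ(a−1, z) = (a−1)·φ(a, z) + z·(∂/∂z)φ(a, z). -/
open Real

/-- `phi a z = Σ_{n≥0} (−1)^n z^(2n)/(a)_{2n}` where `(a)_m` is the Pochhammer symbol. -/
noncomputable def phi (a z : ℝ) : ℝ :=
  ∑' n : ℕ, (-1 : ℝ) ^ n * z ^ (2 * n) / (ascPochhammer ℝ (2 * n)).eval a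

/-!
Write `phi a z = ψ (z ^ 2)` with `ψ w = ∑ cₙ wⁿ` and `cₙ = (-1)ⁿ / (a)_{2n}`. Since
`(a - 1) (a)_m = (a - 1)_{m+1} = (a - 1)_m (a - 1 + m)`, the coefficients of `(a - 1) phi (a - 1)`
are `(a - 1 + 2n) cₙ`, while `z ∂_z phi a z = 2 w ψ'(w) = ∑ 2n cₙ wⁿ`. Termwise differentiation
is justified by the ratio test: `c_{n+1} / cₙ = -1 / ((a + 2n) (a + 2n + 1)) → 0`, so `ψ` is entire.
-/

open Filter Topology

theorem mul_ascPochhammer_eval_add_one {S : Type*} [CommSemiring S] (x : S) (m : ℕ) :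
    x * (ascPochhammer S m).eval (x + 1) = (ascPochhammer S m).eval x * (x + m) := by
  rw [← ascPochhammer_succ_eval, ascPochhammer_succ_left]
  simp

theorem ascPochhammer_eval_ne_zero_s2 {b : ℝ} (hb : ∀ k : ℕ, b ≠ -(k : ℝ)) (m : ℕ) :
    (ascPochhammer ℝ m).eval b ≠ 0 := by
  rw [Ne, ascPochhammer_eval_eq_zero_iff]
  rintro ⟨k, -, hk⟩
  exact hb k (neg_eq_iff_eq_neg.mp hk.symm)

section PowerSeries

variable {c : ℕ → ℝ}

theorem summable_succ_mul_norm_mul_pow_of_tendsto_ratio (hc0 : ∀ n, c n ≠ 0)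
    (hc : Tendsto (fun n => c (n + 1) / c n) atTop (𝓝 0)) {R : ℝ} (hR : 0 < R) :
    Summable fun n : ℕ => ((n : ℝ) + 1) * ‖c n‖ * R ^ n := by
  refine summable_of_ratio_test_tendsto_lt_one zero_lt_one
    (.of_forall fun n => by have := hc0 n; positivity) ?_
  have hratio : ∀ n : ℕ, (1 + 1 / ((n : ℝ) + 1)) * ‖c (n + 1) / c n‖ * R
      = ‖((n + 1 : ℕ) + 1) * ‖c (n + 1)‖ * R ^ (n + 1)‖ / ‖((n : ℝ) + 1) * ‖c n‖ * R ^ n‖ := by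
    intro n
    have := norm_pos_iff.mpr (hc0 n)
    simp only [norm_div, norm_mul, norm_pow, norm_norm, Real.norm_of_nonneg hR.le]
    rw [Real.norm_of_nonneg (by positivity : (0 : ℝ) ≤ (n + 1 : ℕ) + 1),
      Real.norm_of_nonneg (by positivity : (0 : ℝ) ≤ n + 1)]
    field_simp
    push_cast
    ring
  simpa using
    (((tendsto_one_div_add_atTop_nhds_zero_nat.const_add 1).mul hc.norm).mul_const R).congr hratio

theorem summable_mul_mul_pow
    (hc : ∀ R > 0, Summable fun n : ℕ => ((n : ℝ) + 1) * ‖c n‖ * R ^ n) (w : ℝ) (k : ℕ → ℝ)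
    (hk : ∀ n, ‖k n‖ ≤ n + 1) :
    Summable fun n => k n * c n * w ^ n := by
  refine .of_norm_bounded (hc (‖w‖ + 1) (by positivity)) fun n => ?_
  rw [norm_mul, norm_mul, norm_pow]
  gcongr
  · exact hk n
  · linarith

theorem hasDerivAt_tsum_mul_pow
    (hc : ∀ R > 0, Summable fun n : ℕ => ((n : ℝ) + 1) * ‖c n‖ * R ^ n) (w : ℝ) :
    HasDerivAt (fun x => ∑' n, c n * x ^ n) (∑' n, c n * (n * w ^ (n - 1))) w := by
  set R := ‖w‖ + 1
  have hR : 1 ≤ R := le_add_of_nonneg_left (norm_nonneg w)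
  have hw : w ∈ Metric.ball 0 R := by simp [R]
  refine hasDerivAt_tsum_of_isPreconnected (hc R (by positivity)) Metric.isOpen_ball
    (convex_ball 0 R).isPreconnected (fun n y _ => (hasDerivAt_pow n y).const_mul (c n))
    (fun n y hy => ?_) hw (by simpa using summable_mul_mul_pow hc w 1 (by simp)) hw
  rw [mem_ball_zero_iff] at hy
  calc ‖c n * (n * y ^ (n - 1))‖ = n * ‖c n‖ * ‖y‖ ^ (n - 1) := by
        rw [norm_mul, norm_mul, norm_pow, Real.norm_natCast]
        ring
    _ ≤ (n + 1) * ‖c n‖ * R ^ (n - 1) := by gcongr; linarith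
    _ ≤ (n + 1) * ‖c n‖ * R ^ n := by gcongr; exact Nat.sub_le n 1

theorem mul_tsum_mul_natCast_mul_pow_sub_one (w : ℝ) :
    w * ∑' n, c n * (n * w ^ (n - 1)) = ∑' n : ℕ, n * c n * w ^ n := by
  rw [← tsum_mul_left]
  refine tsum_congr fun n => ?_
  rcases n with _ | n
  · simp
  · simp only [Nat.add_sub_cancel, pow_succ]
    ring

end PowerSeries

noncomputable def phiCoeff (a : ℝ) (n : ℕ) : ℝ :=
  (-1) ^ n / (ascPochhammer ℝ (2 * n)).eval a

theorem phi_eq_tsum (a z : ℝ) : phi a z = ∑' n, phiCoeff a n * (z ^ 2) ^ n := by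
  refine tsum_congr fun n => ?_
  rw [phiCoeff, ← pow_mul]
  ring

theorem phiCoeff_ne_zero {a : ℝ} (ha : ∀ k : ℕ, a ≠ -(k : ℝ)) (n : ℕ) : phiCoeff a n ≠ 0 :=
  div_ne_zero (pow_ne_zero n (by norm_num)) (ascPochhammer_eval_ne_zero_s2 ha _)

theorem phiCoeff_succ_div {a : ℝ} (ha : ∀ k : ℕ, a ≠ -(k : ℝ)) (n : ℕ) :
    phiCoeff a (n + 1) / phiCoeff a n = -((a + 2 * n) * (a + (2 * n + 1)))⁻¹ := by
  have hP₀ := ascPochhammer_eval_ne_zero_s2 ha (2 * n)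
  have hP₂ := ascPochhammer_eval_ne_zero_s2 ha (2 * n + 1 + 1)
  rw [ascPochhammer_succ_eval, ascPochhammer_succ_eval] at hP₂
  rw [phiCoeff, phiCoeff, show 2 * (n + 1) = 2 * n + 1 + 1 by ring, ascPochhammer_succ_eval,
    ascPochhammer_succ_eval]
  field_simp
  push_cast
  ring

theorem tendsto_phiCoeff_succ_div {a : ℝ} (ha : ∀ k : ℕ, a ≠ -(k : ℝ)) :
    Tendsto (fun n => phiCoeff a (n + 1) / phiCoeff a n) atTop (𝓝 0) := by
  have hlin (b : ℝ) : Tendsto (fun n : ℕ => a + (2 * n + b)) atTop atTop :=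
    tendsto_atTop_add_const_left _ _ <| tendsto_atTop_add_const_right _ _ <|
      tendsto_natCast_atTop_atTop.const_mul_atTop two_pos
  simp_rw [phiCoeff_succ_div ha]
  simpa using ((hlin 0).atTop_mul_atTop₀ (hlin 1)).inv_tendsto_atTop.neg

theorem sub_one_mul_phiCoeff_sub_one {a : ℝ} (ha : ∀ k : ℕ, a ≠ -(k : ℝ))
    (ha' : ∀ k : ℕ, a - 1 ≠ -(k : ℝ)) (n : ℕ) :
    (a - 1) * phiCoeff (a - 1) n = (a - 1 + 2 * n) * phiCoeff a n := by
  have key := mul_ascPochhammer_eval_add_one (a - 1) (2 * n)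
  rw [sub_add_cancel] at key
  have hP := ascPochhammer_eval_ne_zero_s2 ha (2 * n)
  have hP' := ascPochhammer_eval_ne_zero_s2 ha' (2 * n)
  rw [phiCoeff, phiCoeff, mul_div_assoc', mul_div_assoc', div_eq_div_iff hP' hP]
  push_cast at key
  linear_combination (-1) ^ n * key

theorem phi_recurrence (a : ℝ) (ha : ∀ k : ℕ, a ≠ -(k : ℝ))
    (ha' : ∀ k : ℕ, a - 1 ≠ -(k : ℝ)) (z : ℝ) :
    (a - 1) * phi (a - 1) z = (a - 1) * phi a z + z * deriv (phi a) z := by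
  have hc R (hR : 0 < R) := summable_succ_mul_norm_mul_pow_of_tendsto_ratio
    (phiCoeff_ne_zero ha) (tendsto_phiCoeff_succ_div ha) hR
  have hderiv : HasDerivAt (phi a)
      ((∑' n, phiCoeff a n * (n * (z ^ 2) ^ (n - 1))) * (2 * z)) z := by
    rw [show phi a = _ from funext (phi_eq_tsum a)]
    exact (hasDerivAt_tsum_mul_pow hc (z ^ 2)).comp z
      ((hasDerivAt_pow 2 z).congr_deriv (by norm_num : ((2 : ℕ) : ℝ) * z ^ (2 - 1) = 2 * z))
  have euler : z * deriv (phi a) z = 2 * ∑' n : ℕ, n * phiCoeff a n * (z ^ 2) ^ n := by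
    rw [hderiv.deriv, ← mul_tsum_mul_natCast_mul_pow_sub_one]
    ring
  have hs1 : Summable fun n => phiCoeff a n * (z ^ 2) ^ n := by
    simpa using summable_mul_mul_pow hc (z ^ 2) 1 (by simp)
  have hs2 := summable_mul_mul_pow hc (z ^ 2) Nat.cast (by simp)
  calc (a - 1) * phi (a - 1) z = ∑' n : ℕ, (a - 1 + 2 * n) * phiCoeff a n * (z ^ 2) ^ n := by
        rw [phi_eq_tsum, ← tsum_mul_left]
        simp_rw [← mul_assoc, sub_one_mul_phiCoeff_sub_one ha ha']
    _ = ∑' n : ℕ, ((a - 1) * (phiCoeff a n * (z ^ 2) ^ n)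
          + 2 * (n * phiCoeff a n * (z ^ 2) ^ n)) := tsum_congr fun n => by ring
    _ = (a - 1) * phi a z + z * deriv (phi a) z := by
      rw [(hs1.mul_left _).tsum_add (hs2.mul_left _), tsum_mul_left, tsum_mul_left, euler,
        phi_eq_tsum]
end

section
/- For every μ > 0 and every real z, z·φ(μ+2, z) = μ(μ+1)·∫₀¹ (1−t)^{μ−1}·sin(zt) dt. -/
open Real MeasureTheory

open Nat

/-!
Expand `sin (z t) = Σ (-1)^n (z t)^(2n+1)/(2n+1)!` and integrate term by term against the
integrable weight `(1 - t)^(μ-1)`; the series is dominated by that of `sinh |z|`. Each term is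
a Beta integral, `∫₀¹ t^k (1-t)^(μ-1) dt = k!/(μ)_{k+1}`, and `(μ)_{2n+2} = μ(μ+1)(μ+2)_{2n}`.
-/

theorem ascPochhammer_eval_eq_prod_range {R : Type*} [CommSemiring R] (n : ℕ) (a : R) :
    (ascPochhammer R n).eval a = ∏ j ∈ Finset.range n, (a + j) := by
  induction n with
  | zero => simp
  | succ n ih => rw [ascPochhammer_succ_eval, ih, Finset.prod_range_succ]

theorem ascPochhammer_eval_add_two {R : Type*} [CommSemiring R] (n : ℕ) (a : R) :
    (ascPochhammer R (n + 2)).eval a = a * (a + 1) * (ascPochhammer R n).eval (a + 2) := by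
  simp only [ascPochhammer_succ_left, Polynomial.eval_mul, Polynomial.eval_X,
    Polynomial.eval_comp, Polynomial.eval_add, Polynomial.eval_one, add_assoc, one_add_one_eq_two,
    mul_assoc]

theorem integral_pow_mul_one_sub_rpow {μ : ℝ} (hμ : 0 < μ) (k : ℕ) :
    ∫ t in (0:ℝ)..1, t ^ k * (1 - t) ^ (μ - 1) =
      k ! / (ascPochhammer ℝ (k + 1)).eval μ := by
  have hbeta :
      Complex.betaIntegral (k + 1) μ = k ! / ∏ j ∈ Finset.range (k + 1), ((μ : ℂ) + j) := by
    rw [← Complex.betaIntegral_symm,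
      Complex.betaIntegral_eval_nat_add_one_right (by simpa using hμ) k]
  have hreal :
      Complex.betaIntegral (k + 1) μ = ∫ t in (0:ℝ)..1, t ^ k * (1 - t) ^ (μ - 1) := by
    rw [Complex.betaIntegral, ← intervalIntegral.integral_ofReal]
    refine intervalIntegral.integral_congr fun t ht => ?_
    rw [Set.uIcc_of_le zero_le_one] at ht
    simp only [add_sub_cancel_right, Complex.cpow_natCast]
    push_cast
    rw [Complex.ofReal_cpow (by linarith [ht.2])]
    push_cast
    rfl
  rw [ascPochhammer_eval_eq_prod_range]
  exact_mod_cast hreal.symm.trans hbeta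

theorem integrableOn_one_sub_rpow {r : ℝ} (hr : -1 < r) :
    IntegrableOn (fun t : ℝ => (1 - t) ^ r) (Set.Ioc 0 1) := by
  rw [← intervalIntegrable_iff_integrableOn_Ioc_of_le zero_le_one]
  simpa using
    ((intervalIntegral.intervalIntegrable_rpow' (a := 0) (b := 1) hr).comp_sub_left 1).symm

theorem hasSum_integral_mul_of_norm_le {α 𝕜 : Type*} [MeasurableSpace α] [RCLike 𝕜]
    {ν : Measure α} {g : α → 𝕜} {f : ℕ → α → 𝕜} {C : ℕ → ℝ} (hg : Integrable g ν)
    (hf : ∀ n, AEStronglyMeasurable (f n) ν) (hfC : ∀ n, ∀ᵐ x ∂ν, ‖f n x‖ ≤ C n)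
    (hC : Summable C) :
    HasSum (fun n => ∫ x, g x * f n x ∂ν) (∫ x, g x * ∑' n, f n x ∂ν) := by
  have hint : ∀ n, Integrable (fun x => g x * f n x) ν := fun n => hg.mul_bdd (hf n) (hfC n)
  have hnorm : ∀ n, ∫ x, ‖g x * f n x‖ ∂ν ≤ C n * ∫ x, ‖g x‖ ∂ν := by
    intro n
    rw [← integral_const_mul]
    refine integral_mono_ae (hint n).norm (hg.norm.const_mul _) ?_
    filter_upwards [hfC n] with x hx
    rw [norm_mul, mul_comm]
    exact mul_le_mul_of_nonneg_right hx (norm_nonneg _)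
  have hsum : Summable fun n => ∫ x, ‖g x * f n x‖ ∂ν :=
    (hC.mul_right _).of_nonneg_of_le (fun n => integral_nonneg fun _ => norm_nonneg _) hnorm
  simpa only [tsum_mul_left] using hasSum_integral_of_summable_integral_norm hint hsum

theorem norm_sin_series_term_le (n : ℕ) (z : ℝ) {t : ℝ} (ht : |t| ≤ 1) :
    ‖(-1) ^ n * (z * t) ^ (2 * n + 1) / (2 * n + 1)!‖ ≤
      |z| ^ (2 * n + 1) / (2 * n + 1)! := by
  simp only [norm_div, norm_mul, norm_pow, norm_neg, norm_one, one_pow, one_mul,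
    Real.norm_eq_abs, Nat.abs_cast]
  gcongr
  exact mul_le_of_le_one_right (abs_nonneg z) ht

theorem mul_integral_one_sub_rpow_mul_sin_series_term {μ : ℝ} (hμ : 0 < μ) (n : ℕ) (z : ℝ) :
    μ * (μ + 1) *
        ∫ t in (0:ℝ)..1, (1 - t) ^ (μ - 1) * ((-1) ^ n * (z * t) ^ (2 * n + 1) / (2 * n + 1)!) =
      z * ((-1) ^ n * z ^ (2 * n) / (ascPochhammer ℝ (2 * n)).eval (μ + 2)) := by
  have hP := ascPochhammer_pos (2 * n) (μ + 2) (by linarith)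
  have hintegrand : ∀ t : ℝ,
      (1 - t) ^ (μ - 1) * ((-1) ^ n * (z * t) ^ (2 * n + 1) / (2 * n + 1)!) =
      (-1) ^ n * z ^ (2 * n + 1) / (2 * n + 1)! * (t ^ (2 * n + 1) * (1 - t) ^ (μ - 1)) := by
    intro t
    ring
  simp only [hintegrand, intervalIntegral.integral_const_mul, integral_pow_mul_one_sub_rpow hμ,
    ascPochhammer_eval_add_two]
  field_simp
  ring

theorem phi_sin_integral (μ : ℝ) (hμ : 0 < μ) (z : ℝ) :
    z * phi (μ + 2) z =
      μ * (μ + 1) * ∫ t in (0:ℝ)..1, (1 - t) ^ (μ - 1) * Real.sin (z * t) := by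
  have hseries := hasSum_integral_mul_of_norm_le
    (f := fun n t => (-1) ^ n * (z * t) ^ (2 * n + 1) / (2 * n + 1)!)
    (integrableOn_one_sub_rpow (r := μ - 1) (by linarith)) (fun n => by fun_prop)
    (fun n => (ae_restrict_mem measurableSet_Ioc).mono fun t ht =>
      norm_sin_series_term_le n z (abs_le.mpr ⟨by linarith [ht.1], ht.2⟩))
    (Real.hasSum_sinh |z|).summable
  simp only [(Real.hasSum_sin _).tsum_eq, ← intervalIntegral.integral_of_le zero_le_one]
    at hseries
  rw [← hseries.tsum_eq, ← tsum_mul_left, phi, ← tsum_mul_left]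
  exact tsum_congr fun n => (mul_integral_one_sub_rpow_mul_sin_series_term hμ n z).symm
end

section
/- For every μ > 0 and every z > 0, √z · s_{μ−1/2, 1/2}(z) = ∫₀^z t^{μ−1}·sin(z−t) dt. -/
open Real

/-- Lommel function of the first kind `s_{ν,1/2}(z)`. -/
noncomputable def lommel (ν z : ℝ) : ℝ :=
  z ^ (ν + 1) / ((ν + 1 / 2) * (ν + 3 / 2)) * phi (ν + 5 / 2) z

/-!
Expand `sin (z - t)` in its Taylor series and integrate term by term (dominated convergence,
`t ^ (μ - 1)` being integrable on `(0, z)`). Each term is a Beta integral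
`n! z^(μ+n) / (μ)_{n+1}`, and the resulting series is that of `√z · s_{μ-1/2,1/2}(z)`,
because `(μ)_{2k+2} = μ (μ+1) (μ+2)_{2k}`.
-/

open MeasureTheory Polynomial Nat Set

theorem ascPochhammer_eval_eq_prod {S : Type*} [CommSemiring S] (n : ℕ) (a : S) :
    (ascPochhammer S n).eval a = ∏ j ∈ Finset.range n, (a + j) := by
  induction n with
  | zero => simp
  | succ n ih => rw [ascPochhammer_succ_eval, ih, Finset.prod_range_succ]

theorem ascPochhammer_eval_two_add {S : Type*} [CommSemiring S] (m : ℕ) (a : S) :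
    (ascPochhammer S (2 + m)).eval a = a * (a + 1) * (ascPochhammer S m).eval (a + 2) := by
  rw [← ascPochhammer_mul, eval_mul, eval_comp]
  simp [ascPochhammer_eval_eq_prod, Finset.prod_range_succ]

theorem integral_rpow_sub_one_mul_sub_pow {μ z : ℝ} (hμ : 0 < μ) (hz : 0 < z) (n : ℕ) :
    ∫ t in (0 : ℝ)..z, t ^ (μ - 1) * (z - t) ^ n
      = n ! * z ^ (μ + n) / (ascPochhammer ℝ (n + 1)).eval μ := by
  have hbeta := Complex.betaIntegral_scaled μ (n + 1) hz
  rw [Complex.betaIntegral_eval_nat_add_one_right (by simpa using hμ)] at hbeta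
  apply Complex.ofReal_injective
  rw [← intervalIntegral.integral_ofReal]
  convert hbeta using 1
  · refine intervalIntegral.integral_congr fun t ht => ?_
    rw [Set.uIcc_of_le hz.le] at ht
    simp [Complex.ofReal_cpow ht.1, ← Complex.cpow_natCast]
  · rw [show (μ : ℂ) + (n + 1) - 1 = (μ + n : ℝ) by push_cast; ring,
      ← Complex.ofReal_cpow hz.le, ascPochhammer_eval_eq_prod]
    push_cast
    ring

theorem sqrt_mul_lommel_sub_half {μ z : ℝ} (hμ : 0 < μ) (hz : 0 ≤ z) :
    √z * lommel (μ - 1 / 2) z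
      = ∑' k : ℕ, (-1) ^ k * z ^ (μ + (2 * k + 1)) / (ascPochhammer ℝ (2 * k + 2)).eval μ := by
  rw [lommel, phi, ← mul_assoc, ← tsum_mul_left]
  refine tsum_congr fun k => ?_
  have hpow : √z * z ^ (μ + 1 / 2) * z ^ (2 * k) = z ^ (μ + (2 * k + 1)) := by
    rw [sqrt_eq_rpow, ← rpow_add' hz (by linarith), ← rpow_natCast,
      ← rpow_add' hz (by push_cast; linarith)]
    push_cast
    ring_nf
  have hpoch := ascPochhammer_pos (2 * k) (μ + 2) (by linarith)
  rw [← hpow, show 2 * k + 2 = 2 + 2 * k by ring, ascPochhammer_eval_two_add,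
    show μ - 1 / 2 + 1 = μ + 1 / 2 by ring, show μ - 1 / 2 + 1 / 2 = μ by ring,
    show μ - 1 / 2 + 3 / 2 = μ + 1 by ring, show μ - 1 / 2 + 5 / 2 = μ + 2 by ring]
  field_simp

theorem hasSum_intervalIntegral_mul_sin {g u : ℝ → ℝ} {a b M : ℝ}
    (hg : IntervalIntegrable g volume a b) (hu : Measurable u) (hM : ∀ t ∈ uIoc a b, |u t| ≤ M) :
    HasSum (fun k : ℕ => ∫ t in a..b, g t * ((-1) ^ k * u t ^ (2 * k + 1) / (2 * k + 1)!))
      (∫ t in a..b, g t * sin (u t)) := by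
  refine intervalIntegral.hasSum_integral_of_dominated_convergence
    (fun k t => ‖g t‖ * (M ^ (2 * k + 1) / (2 * k + 1)!))
    (fun k => hg.def'.aestronglyMeasurable.mul (by fun_prop : Measurable _).aestronglyMeasurable)
    (fun k => ae_of_all _ fun t ht => ?_) (ae_of_all _ fun t _ => ?_) ?_
    (ae_of_all _ fun t _ => (hasSum_sin (u t)).mul_left (g t))
  · simp only [norm_mul, norm_div, norm_pow, norm_neg, norm_one, one_pow, one_mul,
      RCLike.norm_natCast, Real.norm_eq_abs (u t)]
    gcongr
    exact hM t ht
  · have hodd : Function.Injective fun k : ℕ => 2 * k + 1 := fun i j h => by simp_all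
    exact ((Real.summable_pow_div_factorial M).comp_injective hodd).mul_left _
  · simp_rw [tsum_mul_left]
    exact hg.norm.mul_const _

theorem sqrt_mul_lommel_eq_integral (μ : ℝ) (hμ : 0 < μ) (z : ℝ) (hz : 0 < z) :
    Real.sqrt z * lommel (μ - 1/2) z = ∫ t in (0:ℝ)..z, t ^ (μ - 1) * Real.sin (z - t) := by
  have hbound : ∀ t ∈ uIoc 0 z, |z - t| ≤ z := by
    rw [uIoc_of_le hz.le]
    exact fun t ht => abs_le.mpr ⟨by linarith [ht.2], by linarith [ht.1]⟩
  rw [sqrt_mul_lommel_sub_half hμ hz.le]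
  refine HasSum.tsum_eq ?_
  convert hasSum_intervalIntegral_mul_sin (g := fun t => t ^ (μ - 1))
    (intervalIntegral.intervalIntegrable_rpow' (by linarith)) (by fun_prop) hbound using 1
  funext k
  have hpoch := ascPochhammer_pos (2 * k + 2) μ hμ
  simp_rw [mul_div_assoc', mul_left_comm _ ((-1 : ℝ) ^ k), mul_div_right_comm _ _ ((2 * k + 1)! : ℝ),
    intervalIntegral.integral_const_mul, integral_rpow_sub_one_mul_sub_pow hμ hz]
  push_cast
  field_simp
end

section
/- (Monotone form of l'Hospital's rule) Let a < b be real numbers and let f, g : ℝ → ℝ be differentiable on (a,b). Assume that g′(x) > 0 for all x ∈ (a,b), that f(x) → 0 and g(x) → 0 as x → a from the right, and that x ↦ f′(x)/g′(x) is strictly increasing on (a,b). Then x ↦ f(x)/g(x) is strictly increasing on (a,b). -/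
/-!
Since `g' > 0` and `g → 0` at `a⁺`, `g` is positive and increasing. For `t < x` in `(a, b)`,
Cauchy's mean value theorem writes the slope ratio `(f x - f t) / (g x - g t)` as `f' c / g' c`
with `c ∈ (t, x)`, so it lies strictly between `f' t / g' t` and `f' x / g' x`. Letting `t → a⁺`
gives `f x / g x ≤ f' x / g' x`. For `x < y`, `f y / g y` is the mediant of `f x / g x` and the
slope ratio over `[x, y]`, which exceeds `f' x / g' x ≥ f x / g x`; hence `f x / g x < f y / g y`.
-/

open Set Filter Topology

theorem div_lt_add_div_add {p q r s : ℝ} (hq : 0 < q) (hs : 0 < s) (h : p / q < r / s) :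
    p / q < (p + r) / (q + s) := by
  rw [div_lt_div_iff₀ hq hs] at h
  rw [div_lt_div_iff₀ hq (add_pos hq hs)]
  linarith

section Ioo

variable {f g : ℝ → ℝ} {a b x : ℝ}

theorem eventually_mem_Ioo_nhdsWithin_Ioo (hx : x ∈ Ioo a b) :
    ∀ᶠ t in 𝓝[Ioo a b] a, t ∈ Ioo a x :=
  nhdsWithin_mono _ Ioo_subset_Ioi_self (Ioo_mem_nhdsGT hx.1)

theorem strictMonoOn_Ioo_of_deriv_pos (hg' : ∀ x ∈ Ioo a b, 0 < deriv g x) :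
    StrictMonoOn g (Ioo a b) :=
  strictMonoOn_of_deriv_pos (convex_Ioo a b)
    (fun x hx => (differentiableAt_of_deriv_ne_zero (hg' x hx).ne').continuousAt.continuousWithinAt)
    (by rwa [interior_Ioo])

theorem pos_of_strictMonoOn_Ioo_of_tendsto_zero (hg : StrictMonoOn g (Ioo a b))
    (hg0 : Tendsto g (𝓝[Ioo a b] a) (𝓝 0)) (hx : x ∈ Ioo a b) : 0 < g x := by
  have hm : (a + x) / 2 ∈ Ioo a x := ⟨by linarith [hx.1], by linarith [hx.1]⟩
  have hmab : (a + x) / 2 ∈ Ioo a b := ⟨hm.1, hm.2.trans hx.2⟩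
  have := left_nhdsWithin_Ioo_neBot (hx.1.trans hx.2)
  have hgm : 0 ≤ g ((a + x) / 2) := le_of_tendsto hg0 <| by
    filter_upwards [eventually_mem_Ioo_nhdsWithin_Ioo hmab] with t ht
    exact (hg ⟨ht.1, ht.2.trans hmab.2⟩ hmab ht.2).le
  exact hgm.trans_lt (hg hmab hx hm.2)

theorem exists_sub_div_sub_eq_deriv_div (hf : ∀ x ∈ Ioo a b, DifferentiableAt ℝ f x)
    (hg' : ∀ x ∈ Ioo a b, 0 < deriv g x) {t : ℝ} (ht : t ∈ Ioo a b) (hx : x ∈ Ioo a b)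
    (htx : t < x) :
    ∃ c ∈ Ioo t x, (f x - f t) / (g x - g t) = deriv f c / deriv g c := by
  have hsub : Icc t x ⊆ Ioo a b := Icc_subset_Ioo ht.1 hx.2
  have hg : ∀ y ∈ Icc t x, DifferentiableAt ℝ g y := fun y hy =>
    differentiableAt_of_deriv_ne_zero (hg' y (hsub hy)).ne'
  obtain ⟨c, hc, hcauchy⟩ := exists_ratio_deriv_eq_ratio_slope f htx
    (fun y hy => (hf y (hsub hy)).continuousAt.continuousWithinAt)
    (fun y hy => (hf y (hsub (Ioo_subset_Icc_self hy))).differentiableWithinAt) g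
    (fun y hy => (hg y hy).continuousAt.continuousWithinAt)
    (fun y hy => (hg y (Ioo_subset_Icc_self hy)).differentiableWithinAt)
  have hgtx : 0 < g x - g t := sub_pos.mpr (strictMonoOn_Ioo_of_deriv_pos hg' ht hx htx)
  refine ⟨c, hc, ?_⟩
  rw [div_eq_div_iff hgtx.ne' (hg' c (hsub (Ioo_subset_Icc_self hc))).ne']
  linarith

variable (hf : ∀ x ∈ Ioo a b, DifferentiableAt ℝ f x) (hg' : ∀ x ∈ Ioo a b, 0 < deriv g x)
  (hmono : StrictMonoOn (fun x => deriv f x / deriv g x) (Ioo a b))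
include hf hg' hmono

theorem sub_div_sub_lt_deriv_div {t : ℝ} (ht : t ∈ Ioo a b) (hx : x ∈ Ioo a b) (htx : t < x) :
    (f x - f t) / (g x - g t) < deriv f x / deriv g x := by
  obtain ⟨c, hc, hratio⟩ := exists_sub_div_sub_eq_deriv_div hf hg' ht hx htx
  exact hratio ▸ hmono ⟨ht.1.trans hc.1, hc.2.trans hx.2⟩ hx hc.2

theorem deriv_div_lt_sub_div_sub {y : ℝ} (hx : x ∈ Ioo a b) (hy : y ∈ Ioo a b) (hxy : x < y) :
    deriv f x / deriv g x < (f y - f x) / (g y - g x) := by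
  obtain ⟨c, hc, hratio⟩ := exists_sub_div_sub_eq_deriv_div hf hg' hx hy hxy
  exact hratio ▸ hmono hx ⟨hx.1.trans hc.1, hc.2.trans hy.2⟩ hc.1

theorem div_le_deriv_div (hf0 : Tendsto f (𝓝[Ioo a b] a) (𝓝 0))
    (hg0 : Tendsto g (𝓝[Ioo a b] a) (𝓝 0)) (hx : x ∈ Ioo a b) :
    f x / g x ≤ deriv f x / deriv g x := by
  have := left_nhdsWithin_Ioo_neBot (hx.1.trans hx.2)
  have hgx := pos_of_strictMonoOn_Ioo_of_tendsto_zero (strictMonoOn_Ioo_of_deriv_pos hg') hg0 hx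
  have hlim : Tendsto (fun t => (f x - f t) / (g x - g t)) (𝓝[Ioo a b] a)
      (𝓝 ((f x - 0) / (g x - 0))) :=
    (tendsto_const_nhds.sub hf0).div (tendsto_const_nhds.sub hg0) (by simpa using hgx.ne')
  rw [sub_zero, sub_zero] at hlim
  refine le_of_tendsto hlim ?_
  filter_upwards [eventually_mem_Ioo_nhdsWithin_Ioo hx] with t ht
  exact (sub_div_sub_lt_deriv_div hf hg' hmono ⟨ht.1, ht.2.trans hx.2⟩ hx ht.2).le

end Ioo

theorem monotone_lhospital_general (a b : ℝ) (f g : ℝ → ℝ)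
    (hf : ∀ x ∈ Set.Ioo a b, DifferentiableAt ℝ f x)
    (hg' : ∀ x ∈ Set.Ioo a b, 0 < deriv g x)
    (hf0 : Filter.Tendsto f (nhdsWithin a (Set.Ioo a b)) (nhds 0))
    (hg0 : Filter.Tendsto g (nhdsWithin a (Set.Ioo a b)) (nhds 0))
    (hmono : StrictMonoOn (fun x => deriv f x / deriv g x) (Set.Ioo a b)) :
    StrictMonoOn (fun x => f x / g x) (Set.Ioo a b) := by
  intro x hx y hy hxy
  have hg_mono := strictMonoOn_Ioo_of_deriv_pos hg'
  have hgx := pos_of_strictMonoOn_Ioo_of_tendsto_zero hg_mono hg0 hx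
  have hslope : f x / g x < (f y - f x) / (g y - g x) :=
    (div_le_deriv_div hf hg' hmono hf0 hg0 hx).trans_lt
      (deriv_div_lt_sub_div_sub hf hg' hmono hx hy hxy)
  simpa only [add_sub_cancel] using div_lt_add_div_add hgx (sub_pos.mpr (hg_mono hx hy hxy)) hslope

theorem monotone_lhospital (a b : ℝ) (hab : a < b) (f g : ℝ → ℝ)
    (hf : ∀ x ∈ Set.Ioo a b, DifferentiableAt ℝ f x)
    (hg : ∀ x ∈ Set.Ioo a b, DifferentiableAt ℝ g x)
    (hg' : ∀ x ∈ Set.Ioo a b, 0 < deriv g x)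
    (hf0 : Filter.Tendsto f (nhdsWithin a (Set.Ioo a b)) (nhds 0))
    (hg0 : Filter.Tendsto g (nhdsWithin a (Set.Ioo a b)) (nhds 0))
    (hmono : StrictMonoOn (fun x => deriv f x / deriv g x) (Set.Ioo a b)) :
    StrictMonoOn (fun x => f x / g x) (Set.Ioo a b) :=
  monotone_lhospital_general a b f g hf hg' hf0 hg0 hmono
end

section
/- Define Δ(z) = [s_{3/2,1/2}(z)]² − s_{1/2,1/2}(z)·s_{5/2,1/2}(z) for z > 0. Then for every z > 0, z·Δ(z) = (z²−4)·cos z + cos² z − 2z·sin z + 3; consequently, for every positive integer n, Δ((2n−1)π) < 0 and Δ(2nπ) > 0, so Δ has infinitely many changes of sign on (0,∞). -/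
open Real

/-- The Turán expression `Δ(z) = [s_{3/2,1/2}(z)]² − s_{1/2,1/2}(z)·s_{5/2,1/2}(z)`. -/
noncomputable def turanDelta (z : ℝ) : ℝ :=
  (lommel (3/2) z) ^ 2 - lommel (1/2) z * lommel (5/2) z

/-! For `k : ℕ` one has `(k + 1)_{2n} = (2n + k)! / k!`, so `φ(k + 1, z)` is `k! / z^k` times a
tail of the Taylor series of `cos` or `sin`. This gives the closed forms of `s_{ν,1/2}` for
`ν = 1/2, 3/2, 5/2`; in `Δ` the factors `1/√z` combine to `1/z`, and `sin² + cos² = 1` yields the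
identity for `z·Δ(z)`. At `z = (2n−1)π` it reads `zΔ = 8 − z² < 0`, and at `z = 2nπ` it reads
`zΔ = z² > 0`. -/

open scoped Nat

theorem factorial_mul_ascPochhammer_eval_succ (S : Type*) [Semiring S] (k n : ℕ) :
    (k ! : S) * (ascPochhammer S n).eval ((k + 1 : ℕ) : S) = (k + n)! := by
  rw [ascPochhammer_nat_eq_natCast_ascFactorial, ← Nat.cast_mul,
    Nat.factorial_mul_ascFactorial]

theorem phi_natCast_add_one {k : ℕ} {z S : ℝ} (hz : z ≠ 0)
    (h : HasSum (fun n : ℕ => (-1) ^ n * z ^ (2 * n + k) / (2 * n + k)!) S) :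
    phi (k + 1) z = k ! * S / z ^ k := by
  have hterm : HasSum
      (fun n : ℕ => (-1) ^ n * z ^ (2 * n) / (ascPochhammer ℝ (2 * n)).eval ((k : ℝ) + 1))
      (k ! / z ^ k * S) := by
    refine (h.mul_left _).congr_fun fun n => ?_
    have hpoch := factorial_mul_ascPochhammer_eval_succ ℝ k (2 * n)
    push_cast at hpoch
    rw [← mul_div_cancel_left₀ ((ascPochhammer ℝ (2 * n)).eval ((k : ℝ) + 1))
      (by positivity : (k ! : ℝ) ≠ 0), hpoch, add_comm k]
    field_simp
    ring
  rw [phi, hterm.tsum_eq, div_mul_eq_mul_div]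

theorem phi_three {z : ℝ} (hz : z ≠ 0) : phi 3 z = 2 * (1 - cos z) / z ^ 2 := by
  have hcos := ((hasSum_nat_add_iff' 1).2 (Real.hasSum_cos z)).neg
  rw [Finset.sum_range_one] at hcos
  have h : HasSum (fun n : ℕ => (-1) ^ n * z ^ (2 * n + 2) / (2 * n + 2)!) (1 - cos z) := by
    refine (by simpa using hcos : HasSum _ (1 - cos z)).congr_fun fun n => ?_
    ring_nf
  have := phi_natCast_add_one hz h
  norm_num at this
  exact this

theorem phi_four {z : ℝ} (hz : z ≠ 0) : phi 4 z = 6 * (z - sin z) / z ^ 3 := by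
  have hsin := ((hasSum_nat_add_iff' 1).2 (Real.hasSum_sin z)).neg
  rw [Finset.sum_range_one] at hsin
  have h : HasSum (fun n : ℕ => (-1) ^ n * z ^ (2 * n + 3) / (2 * n + 3)!) (z - sin z) := by
    refine (by simpa using hsin : HasSum _ (z - sin z)).congr_fun fun n => ?_
    ring_nf
  have := phi_natCast_add_one hz h
  norm_num at this
  exact this

theorem phi_five {z : ℝ} (hz : z ≠ 0) : phi 5 z = 24 * (cos z - 1 + z ^ 2 / 2) / z ^ 4 := by
  have hcos := (hasSum_nat_add_iff' 2).2 (Real.hasSum_cos z)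
  rw [show ∑ i ∈ Finset.range 2, (-1 : ℝ) ^ i * z ^ (2 * i) / (2 * i)! = 1 - z ^ 2 / 2 by
    simp [Finset.sum_range_succ]; ring] at hcos
  have h : HasSum (fun n : ℕ => (-1) ^ n * z ^ (2 * n + 4) / (2 * n + 4)!)
      (cos z - 1 + z ^ 2 / 2) := by
    refine (by simpa [sub_add] using hcos : HasSum _ (cos z - 1 + z ^ 2 / 2)).congr_fun fun n => ?_
    ring_nf
  have := phi_natCast_add_one hz h
  norm_num at this
  exact this

theorem rpow_natCast_add_half {z : ℝ} (hz : 0 < z) (m : ℕ) :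
    z ^ ((m : ℝ) + 1 / 2) = z ^ m * √z := by
  rw [rpow_add hz, rpow_natCast, sqrt_eq_rpow]

theorem lommel_one_half {z : ℝ} (hz : 0 < z) : lommel (1 / 2) z = (1 - cos z) / √z := by
  have hsqrt := sq_sqrt hz.le
  have hsqrt_pos := sqrt_pos.2 hz
  rw [lommel, show (1 / 2 : ℝ) + 1 = (1 : ℕ) + 1 / 2 by norm_num, rpow_natCast_add_half hz,
    show (1 / 2 : ℝ) + 5 / 2 = 3 by norm_num, phi_three hz.ne']
  field_simp
  rw [hsqrt]
  ring

theorem lommel_three_halves {z : ℝ} (hz : 0 < z) : lommel (3 / 2) z = (z - sin z) / √z := by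
  have hsqrt := sq_sqrt hz.le
  have hsqrt_pos := sqrt_pos.2 hz
  rw [lommel, show (3 / 2 : ℝ) + 1 = (2 : ℕ) + 1 / 2 by norm_num, rpow_natCast_add_half hz,
    show (3 / 2 : ℝ) + 5 / 2 = 4 by norm_num, phi_four hz.ne']
  field_simp
  rw [hsqrt]
  ring

theorem lommel_five_halves {z : ℝ} (hz : 0 < z) :
    lommel (5 / 2) z = (z ^ 2 + 2 * cos z - 2) / √z := by
  have hsqrt := sq_sqrt hz.le
  have hsqrt_pos := sqrt_pos.2 hz
  rw [lommel, show (5 / 2 : ℝ) + 1 = (3 : ℕ) + 1 / 2 by norm_num, rpow_natCast_add_half hz,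
    show (5 / 2 : ℝ) + 5 / 2 = 5 by norm_num, phi_five hz.ne']
  field_simp
  rw [hsqrt]
  ring

theorem mul_turanDelta {z : ℝ} (hz : 0 < z) :
    z * turanDelta z = (z ^ 2 - 4) * cos z + cos z ^ 2 - 2 * z * sin z + 3 := by
  have hsqrt := sq_sqrt hz.le
  have hsqrt_pos := sqrt_pos.2 hz
  rw [turanDelta, lommel_one_half hz, lommel_three_halves hz, lommel_five_halves hz]
  field_simp
  rw [hsqrt]
  linear_combination z * sin_sq_add_cos_sq z

theorem turanDelta_neg_of_cos_eq_neg_one {z : ℝ} (hz : 3 ≤ z) (hcos : cos z = -1) :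
    turanDelta z < 0 := by
  have hsin : sin z = 0 := sin_eq_zero_iff_cos_eq.2 (Or.inr hcos)
  have h := mul_turanDelta (by linarith : 0 < z)
  rw [hcos, hsin] at h
  nlinarith

theorem turanDelta_pos_of_cos_eq_one {z : ℝ} (hz : 0 < z) (hcos : cos z = 1) :
    0 < turanDelta z := by
  have hsin : sin z = 0 := sin_eq_zero_iff_cos_eq.2 (Or.inl hcos)
  have h := mul_turanDelta hz
  rw [hcos, hsin] at h
  nlinarith

theorem turanDelta_sign_changes :
    (∀ z : ℝ, 0 < z → z * turanDelta z =
      (z ^ 2 - 4) * Real.cos z + (Real.cos z) ^ 2 - 2 * z * Real.sin z + 3) ∧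
    (∀ n : ℕ, 1 ≤ n →
      turanDelta ((2 * (n : ℝ) - 1) * Real.pi) < 0 ∧
      0 < turanDelta (2 * (n : ℝ) * Real.pi)) := by
  refine ⟨fun z hz => mul_turanDelta hz, fun n hn => ⟨?_, ?_⟩⟩
  · have hn : (1 : ℝ) ≤ n := by exact_mod_cast hn
    apply turanDelta_neg_of_cos_eq_neg_one
    · nlinarith [pi_gt_three]
    · rw [← cos_nat_mul_two_pi_sub_pi n]
      ring_nf
  · apply turanDelta_pos_of_cos_eq_one
    · have : 0 < n := hn
      positivity
    · rw [← cos_nat_mul_two_pi n]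
      ring_nf
end
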